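/- Let G be a finite connected graph with minimum degree at least 2 and average degree μ ≥ μ₀ ≥ 2, and let η = η(μ) be the distance from μ to the nearest integer. Then ln Λ(G) ≥ ln(μ−1) + η³/(8μ³), where Λ(G) = ∏_v (deg(v)−1)^{deg(v)/(nμ)} with n = |V(G)|. -/

import Mathlib

/-!
With `g x = x * log (x - 1)` one has `log Λ(G) = ∑ᵥ g (deg v) / (n μ)`, and `g` is convex on
`[2, ∞)` since `g'' x = (x - 2) / (x - 1) ^ 2`; Jensen at the mean `μ` gives `log (μ - 1)`.
The gain comes from the degrees being integers, hence at distance at least `η` from `μ`.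
On `[2, μ + 1]` we have `g'' t ≥ (t - 2) / μ ^ 2 ≥ (t - c) / μ ^ 2` for any `c ≥ 2`, so `g` minus
its tangent at `μ` dominates the cubic with second derivative `(t - c) / μ ^ 2` and the same
first-order data at `μ`. Taking `c = 2` to the left of `μ` and `c = μ` at `μ + η` (and using
convexity beyond `μ + η`), `g` exceeds its tangent at `μ` by at least `η ^ 3 / (6 μ ^ 2)` at every
degree; summing over the vertices gives the bound, even with `6` in place of `8`.
-/

open Real Set Finset

theorem ConvexOn.add_mul_sub_le_of_hasDerivAt {S : Set ℝ} {f : ℝ → ℝ} {f' x y : ℝ}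
    (hf : ConvexOn ℝ S f) (hx : x ∈ S) (hy : y ∈ S) (hd : HasDerivAt f f' x) :
    f x + f' * (y - x) ≤ f y := by
  rcases lt_trichotomy x y with hxy | rfl | hyx
  · have := hf.le_slope_of_hasDerivAt hx hy hxy hd
    rw [slope_def_field, le_div_iff₀ (sub_pos.2 hxy)] at this
    linarith
  · simp
  · have := hf.slope_le_of_hasDerivAt hy hx hyx hd
    rw [slope_def_field, div_le_iff₀ (sub_pos.2 hyx)] at this
    linarith

theorem ConvexOn.le_of_hasDerivAt_of_le {S : Set ℝ} {f : ℝ → ℝ} {fx fy x y : ℝ}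
    (hf : ConvexOn ℝ S f) (hx : x ∈ S) (hy : y ∈ S) (hxy : x ≤ y)
    (hdx : HasDerivAt f fx x) (hdy : HasDerivAt f fy y) : fx ≤ fy := by
  rcases hxy.eq_or_lt with rfl | hxy
  · exact (hdx.unique hdy).le
  · exact (hf.le_slope_of_hasDerivAt hx hy hxy hdx).trans (hf.slope_le_of_hasDerivAt hx hy hxy hdy)

theorem convexOn_of_hasDerivAt2_nonneg {D : Set ℝ} (hD : Convex ℝ D) {f f' f'' : ℝ → ℝ}
    (hf : ∀ x ∈ D, HasDerivAt f (f' x) x) (hf' : ∀ x ∈ D, HasDerivAt f' (f'' x) x)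
    (hf'' : ∀ x ∈ D, 0 ≤ f'' x) : ConvexOn ℝ D f :=
  convexOn_of_hasDerivWithinAt2_nonneg hD
    (fun x hx ↦ (hf x hx).continuousAt.continuousWithinAt)
    (fun x hx ↦ (hf x (interior_subset hx)).hasDerivWithinAt)
    (fun x hx ↦ (hf' x (interior_subset hx)).hasDerivWithinAt)
    (fun x hx ↦ hf'' x (interior_subset hx))

theorem min_sub_floor_ceil_sub_eq_abs_sub_round (x : ℝ) :
    min (x - ⌊x⌋) (⌈x⌉ - x) = |x - round x| := by
  rw [abs_sub_round_eq_min, Int.self_sub_floor]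
  rcases eq_or_ne (Int.fract x) 0 with h | h
  · rw [h, min_eq_left (sub_nonneg.2 (Int.le_ceil x))]
    norm_num
  · rw [Int.ceil_sub_self_eq h]

namespace MooreBound

noncomputable def g (x : ℝ) : ℝ := x * log (x - 1)

noncomputable def g' (x : ℝ) : ℝ := log (x - 1) + x / (x - 1)

theorem hasDerivAt_g {x : ℝ} (hx : 1 < x) : HasDerivAt g (g' x) x := by
  have h1 : x - 1 ≠ 0 := by linarith
  refine ((hasDerivAt_id' x).mul (((hasDerivAt_id' x).sub_const 1).log h1)).congr_deriv ?_
  rw [g']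
  field_simp

theorem hasDerivAt_g' {x : ℝ} (hx : 1 < x) : HasDerivAt g' ((x - 2) / (x - 1) ^ 2) x := by
  have h1 : x - 1 ≠ 0 := by linarith
  refine ((((hasDerivAt_id' x).sub_const 1).log h1).add
    ((hasDerivAt_id' x).div ((hasDerivAt_id' x).sub_const 1) h1)).congr_deriv ?_
  field_simp
  ring

theorem convexOn_g : ConvexOn ℝ (Ici 2) g :=
  convexOn_of_hasDerivAt2_nonneg (convex_Ici 2)
    (fun x hx ↦ hasDerivAt_g (by linarith [mem_Ici.1 hx]))
    (fun x hx ↦ hasDerivAt_g' (by linarith [mem_Ici.1 hx]))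
    (fun x hx ↦ div_nonneg (by linarith [mem_Ici.1 hx]) (sq_nonneg _))

theorem add_cubic_le_g {c μ x : ℝ} (hc : 2 ≤ c) (hμ : 2 ≤ μ) (hx : x ∈ Icc 2 (μ + 1)) :
    g μ + g' μ * (x - μ) +
      ((x - c) ^ 3 - (μ - c) ^ 3 - 3 * (μ - c) ^ 2 * (x - μ)) / (6 * μ ^ 2) ≤ g x := by
  have hμ0 : μ ≠ 0 := by positivity
  set Q : ℝ → ℝ := fun t ↦ ((t - c) ^ 3 - (μ - c) ^ 3 - 3 * (μ - c) ^ 2 * (t - μ)) / (6 * μ ^ 2)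
  set Q' : ℝ → ℝ := fun t ↦ ((t - c) ^ 2 - (μ - c) ^ 2) / (2 * μ ^ 2)
  have hQ t : HasDerivAt Q (Q' t) t := by
    refine (((((hasDerivAt_id' t).sub_const c).pow 3).sub_const _).sub
      (((hasDerivAt_id' t).sub_const μ).const_mul _)).div_const _ |>.congr_deriv ?_
    simp only [Q']
    field_simp
    ring
  have hQ' t : HasDerivAt Q' ((t - c) / μ ^ 2) t := by
    refine ((((hasDerivAt_id' t).sub_const c).pow 2).sub_const _).div_const _ |>.congr_deriv ?_
    field_simp
    ring
  have hconv : ConvexOn ℝ (Icc 2 (μ + 1)) (fun t ↦ g t - Q t) := by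
    refine convexOn_of_hasDerivAt2_nonneg (convex_Icc _ _)
      (fun t ht ↦ (hasDerivAt_g (by linarith [ht.1])).sub (hQ t))
      (fun t ht ↦ (hasDerivAt_g' (by linarith [ht.1])).sub (hQ' t)) (fun t ht ↦ ?_)
    obtain ⟨ht2, htμ⟩ := ht
    have hsq : (t - 1) ^ 2 ≤ μ ^ 2 := pow_le_pow_left₀ (by linarith) (by linarith) 2
    have : (t - c) / μ ^ 2 ≤ (t - 2) / (t - 1) ^ 2 :=
      calc (t - c) / μ ^ 2 ≤ (t - 2) / μ ^ 2 := by gcongr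
        _ ≤ (t - 2) / (t - 1) ^ 2 :=
          div_le_div_of_nonneg_left (by linarith) (pow_pos (by linarith) 2) hsq
    linarith
  have := hconv.add_mul_sub_le_of_hasDerivAt ⟨hμ, by linarith⟩ hx
    ((hasDerivAt_g (by linarith)).sub (hQ μ))
  simp only [sub_self, mul_zero, zero_div, sub_zero, Q, Q'] at this
  linarith

theorem add_gap_le_g {μ η x : ℝ} (hμ : 2 ≤ μ) (hη0 : 0 ≤ η) (hη1 : η ≤ 1) (hx : 2 ≤ x)
    (hgap : η ≤ |x - μ|) : g μ + g' μ * (x - μ) + η ^ 3 / (6 * μ ^ 2) ≤ g x := by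
  rcases le_or_gt x μ with hxμ | hμx
  · rw [abs_of_nonpos (by linarith)] at hgap
    have hcubic : η ^ 3 ≤ (x - 2) ^ 3 - (μ - 2) ^ 3 - 3 * (μ - 2) ^ 2 * (x - μ) := by
      have hη3 : η ^ 3 ≤ (μ - x) ^ 3 := pow_le_pow_left₀ hη0 (by linarith) 3
      have hs3 : (μ - x) ^ 3 ≤ (μ - 2) * (μ - x) ^ 2 :=
        calc (μ - x) ^ 3 = (μ - x) * (μ - x) ^ 2 := by ring
          _ ≤ (μ - 2) * (μ - x) ^ 2 := by gcongr
      nlinarith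
    have := add_cubic_le_g le_rfl hμ ⟨hx, by linarith⟩
    have : η ^ 3 / (6 * μ ^ 2) ≤
        ((x - 2) ^ 3 - (μ - 2) ^ 3 - 3 * (μ - 2) ^ 2 * (x - μ)) / (6 * μ ^ 2) := by gcongr
    linarith
  · rw [abs_of_pos (by linarith)] at hgap
    have hnear := add_cubic_le_g (x := μ + η) hμ hμ ⟨by linarith, by linarith⟩
    rw [show ((μ + η - μ) ^ 3 - (μ - μ) ^ 3 - 3 * (μ - μ) ^ 2 * (μ + η - μ)) / (6 * μ ^ 2) =
      η ^ 3 / (6 * μ ^ 2) by ring] at hnear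
    have htangent := convexOn_g.add_mul_sub_le_of_hasDerivAt (mem_Ici.2 (by linarith : 2 ≤ μ + η))
      (mem_Ici.2 hx) (hasDerivAt_g (by linarith))
    have hslope : g' μ * (x - (μ + η)) ≤ g' (μ + η) * (x - (μ + η)) := by
      gcongr
      · linarith
      · exact convexOn_g.le_of_hasDerivAt_of_le (mem_Ici.2 hμ) (mem_Ici.2 (by linarith))
          (by linarith) (hasDerivAt_g (by linarith)) (hasDerivAt_g (by linarith))
    linarith

theorem card_mul_add_le_sum_g {ι : Type*} (s : Finset ι) (x : ι → ℝ) {μ η : ℝ} (hμ : 2 ≤ μ)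
    (hη0 : 0 ≤ η) (hη1 : η ≤ 1) (hx : ∀ i ∈ s, 2 ≤ x i) (hgap : ∀ i ∈ s, η ≤ |x i - μ|)
    (hmean : ∑ i ∈ s, x i = #s * μ) :
    #s * (g μ + η ^ 3 / (6 * μ ^ 2)) ≤ ∑ i ∈ s, g (x i) :=
  calc #s * (g μ + η ^ 3 / (6 * μ ^ 2))
      = ∑ i ∈ s, (g μ + g' μ * (x i - μ) + η ^ 3 / (6 * μ ^ 2)) := by
        rw [sum_add_distrib, sum_add_distrib, ← mul_sum, sum_sub_distrib, hmean]
        simp only [sum_const, nsmul_eq_mul]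
        ring
    _ ≤ ∑ i ∈ s, g (x i) := sum_le_sum fun i hi ↦ add_gap_le_g hμ hη0 hη1 (hx i hi) (hgap i hi)

theorem log_prod_rpow_div_eq {ι : Type*} (s : Finset ι) (x : ι → ℝ) (N : ℝ)
    (hx : ∀ i ∈ s, 1 < x i) :
    log (∏ i ∈ s, (x i - 1) ^ (x i / N)) = (∑ i ∈ s, g (x i)) / N := by
  rw [log_prod fun i hi ↦ (rpow_pos_of_pos (sub_pos.2 (hx i hi)) _).ne', sum_div]
  refine sum_congr rfl fun i hi ↦ ?_
  rw [log_rpow (sub_pos.2 (hx i hi)), g]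
  ring

end MooreBound

open MooreBound in
theorem stmt_8_general {V : Type*} [Fintype V] (G : SimpleGraph V)
    [DecidableRel G.Adj] (hmin : ∀ v, 2 ≤ G.degree v)
    (μ μ₀ : ℝ) (hμdef : μ = (∑ v, (G.degree v : ℝ)) / (Fintype.card V : ℝ))
    (hμ₀ : 2 ≤ μ₀) (hμμ₀ : μ₀ ≤ μ) :
    Real.log (∏ v, ((G.degree v : ℝ) - 1) ^
        ((G.degree v : ℝ) / ((Fintype.card V : ℝ) * μ))) ≥
      Real.log (μ - 1) + (min (μ - ⌊μ⌋) (⌈μ⌉ - μ)) ^ 3 / (8 * μ ^ 3) := by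
  have hμ : 2 ≤ μ := hμ₀.trans hμμ₀
  have hn : (0 : ℝ) < Fintype.card V := by
    -- with no vertices `μ = 0 / 0 = 0`
    refine (Nat.cast_nonneg _).lt_of_ne fun h ↦ ?_
    rw [← h, div_zero] at hμdef
    linarith
  have hdeg v : (2 : ℝ) ≤ G.degree v := by exact_mod_cast hmin v
  have hmean : ∑ v, (G.degree v : ℝ) = #(univ : Finset V) * μ := by
    rw [hμdef, card_univ]
    field_simp
  rw [min_sub_floor_ceil_sub_eq_abs_sub_round]
  set η := |μ - round μ|
  have hgap v : η ≤ |(G.degree v : ℝ) - μ| := by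
    simpa [abs_sub_comm] using round_le μ (G.degree v)
  have hsum := card_mul_add_le_sum_g univ _ hμ (abs_nonneg _) (by linarith [abs_sub_round μ])
    (fun v _ ↦ hdeg v) (fun v _ ↦ hgap v) hmean
  rw [card_univ] at hsum
  rw [ge_iff_le, log_prod_rpow_div_eq _ _ _ fun v _ ↦ by linarith [hdeg v],
    le_div_iff₀ (by positivity)]
  calc (log (μ - 1) + η ^ 3 / (8 * μ ^ 3)) * (Fintype.card V * μ)
      = Fintype.card V * (g μ + η ^ 3 / (8 * μ ^ 2)) := by
        rw [g]
        field_simp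
    _ ≤ Fintype.card V * (g μ + η ^ 3 / (6 * μ ^ 2)) := by gcongr; norm_num
    _ ≤ _ := hsum

theorem stmt_8 {V : Type*} [Fintype V] [Nonempty V] (G : SimpleGraph V)
    [DecidableRel G.Adj] (hconn : G.Connected) (hmin : ∀ v, 2 ≤ G.degree v)
    (μ μ₀ : ℝ) (hμdef : μ = (∑ v, (G.degree v : ℝ)) / (Fintype.card V : ℝ))
    (hμ₀ : 2 ≤ μ₀) (hμμ₀ : μ₀ ≤ μ) :
    Real.log (∏ v, ((G.degree v : ℝ) - 1) ^
        ((G.degree v : ℝ) / ((Fintype.card V : ℝ) * μ))) ≥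
      Real.log (μ - 1) + (min (μ - ⌊μ⌋) (⌈μ⌉ - μ)) ^ 3 / (8 * μ ^ 3) :=
  stmt_8_general G hmin μ μ₀ hμdef hμ₀ hμμ₀
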